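/- arXiv:2501.13362 — 7 statements merged into one kernel-verified Lean document; each statement's English description precedes it below -/
import Mathlib

section
/- Let G = H ⋊ ⟨a⟩ be a finite group where H is an abelian normal subgroup and gcd(|H|, ord(a)) = 1. Then for every h ∈ H, the conjugacy class size of h*a in G equals the conjugacy class size of a in G, and both equal the index |H : C_H(a)|. -/
/-- Size of the conjugacy class of `x`. -/
noncomputable def convClassSize {G : Type*} [Group G] (x : G) : ℕ := Nat.card {y : G // IsConj x y}

/-- The set of conjugacy class sizes of `G`. -/
def classSizes (G : Type*) [Group G] : Set ℕ := Set.range (fun x : G => convClassSize x)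

/-- `K = (Z/p)^p`, written multiplicatively. -/
abbrev Kp (p : ℕ) := Fin p → Multiplicative (ZMod p)

/-- The diagonal subgroup `N = ⟨k₁k₂⋯k_p⟩`. -/
def Np (p : ℕ) : Subgroup (Kp p) :=
  Subgroup.zpowers (fun _ => Multiplicative.ofAdd (1 : ZMod p))

/-- `H = K/N`. -/
abbrev Hp (p : ℕ) := Kp p ⧸ Np p

/-- Coordinate permutation automorphism of `K`. -/
def permK (p : ℕ) (σ : Equiv.Perm (Fin p)) : Kp p ≃* Kp p where
  toEquiv := Equiv.arrowCongr σ (Equiv.refl _)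
  map_mul' _ _ := rfl

lemma permK_map_Np (p : ℕ) (σ : Equiv.Perm (Fin p)) :
    (Np p).map (permK p σ : Kp p →* Kp p) = Np p := by
  rw [Np, MonoidHom.map_zpowers]; rfl

/-- The induced automorphism of `H = K/N`. -/
def permH (p : ℕ) (σ : Equiv.Perm (Fin p)) : Hp p ≃* Hp p :=
  QuotientGroup.congr (Np p) (Np p) (permK p σ) (permK_map_Np p σ)

/-- The action of `Sym_p` on `H` as a homomorphism to `MulAut H`. -/
def permHhom (p : ℕ) : Equiv.Perm (Fin p) →* MulAut (Hp p) where
  toFun σ := permH p σ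
  map_one' := by
    ext x
    induction x using QuotientGroup.induction_on with
    | _ x => rfl
  map_mul' σ τ := by
    ext x
    induction x using QuotientGroup.induction_on with
    | _ x => rfl

/-- The subgroup `F = A ⋊ B = ⟨α, β⟩` of `Sym_p`. -/
abbrev Fsub (p : ℕ) (β : Equiv.Perm (Fin p)) : Subgroup (Equiv.Perm (Fin p)) :=
  Subgroup.closure {finRotate p, β}

/-- The group `G = H ⋊ (A ⋊ B)` of the main construction. -/
abbrev Ggrp (p : ℕ) (β : Equiv.Perm (Fin p)) :=
  Hp p ⋊[(permHhom p).comp (Fsub p β).subtype] Fsub p β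

/-- The group `P = H ⋊ A`. -/
abbrev Pgrp (p : ℕ) :=
  Hp p ⋊[(permHhom p).comp (Subgroup.zpowers (finRotate p)).subtype]
    Subgroup.zpowers (finRotate p)

section AuxStmt1

variable {G : Type*} [Group G]

/-- The homomorphism `H → G`, `x ↦ x (a x⁻¹ a⁻¹) = [x, a]`. -/
def stmtF (H : Subgroup G) [H.Normal] (hcomm : ∀ x y : H, x * y = y * x) (a : G) :
    ↥H →* G where
  toFun x := (x : G) * (a * (x : G)⁻¹ * a⁻¹)
  map_one' := by simp
  map_mul' := by
    have hc : ∀ u v : G, u ∈ H → v ∈ H → u * v = v * u := fun u v hu hv =>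
      congrArg Subtype.val (hcomm ⟨u, hu⟩ ⟨v, hv⟩)
    have hconj : ∀ x ∈ H, a * x⁻¹ * a⁻¹ ∈ H := fun x hx =>
      ‹H.Normal›.conj_mem _ (inv_mem hx) a
    rintro ⟨x, hx⟩ ⟨y, hy⟩
    show (x * y) * (a * (x * y)⁻¹ * a⁻¹) = (x * (a * x⁻¹ * a⁻¹)) * (y * (a * y⁻¹ * a⁻¹))
    have c1 : y * (a * x⁻¹ * a⁻¹) = (a * x⁻¹ * a⁻¹) * y := hc _ _ hy (hconj x hx)
    have c2 : (a * y⁻¹ * a⁻¹) * (a * x⁻¹ * a⁻¹) = (a * x⁻¹ * a⁻¹) * (a * y⁻¹ * a⁻¹) :=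
      hc _ _ (hconj y hy) (hconj x hx)
    calc (x * y) * (a * (x * y)⁻¹ * a⁻¹)
        = x * y * ((a * y⁻¹ * a⁻¹) * (a * x⁻¹ * a⁻¹)) := by group
      _ = x * y * ((a * x⁻¹ * a⁻¹) * (a * y⁻¹ * a⁻¹)) := by rw [c2]
      _ = x * (y * (a * x⁻¹ * a⁻¹)) * (a * y⁻¹ * a⁻¹) := by group
      _ = x * ((a * x⁻¹ * a⁻¹) * y) * (a * y⁻¹ * a⁻¹) := by rw [c1]
      _ = (x * (a * x⁻¹ * a⁻¹)) * (y * (a * y⁻¹ * a⁻¹)) := by group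

@[simp] lemma stmtF_apply (H : Subgroup G) [H.Normal] (hcomm : ∀ x y : H, x * y = y * x)
    (a : G) (x : ↥H) : stmtF H hcomm a x = (x : G) * (a * (x : G)⁻¹ * a⁻¹) := rfl

/-- Key lemma: the conjugacy class of `h * a` is `(range f) * h * a`. -/
lemma stmt1_key (H : Subgroup G) [H.Normal] (hcomm : ∀ x y : H, x * y = y * x) (a : G)
    (hsup : H ⊔ Subgroup.zpowers a = ⊤) {h : G} (hh : h ∈ H) (y : G) :
    IsConj (h * a) y ↔ y * (h * a)⁻¹ ∈ (stmtF H hcomm a).range := by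
  have hc : ∀ u v : G, u ∈ H → v ∈ H → u * v = v * u := fun u v hu hv =>
    congrArg Subtype.val (hcomm ⟨u, hu⟩ ⟨v, hv⟩)
  have hN : H.Normal := inferInstance
  have hconj : ∀ x ∈ H, a * x⁻¹ * a⁻¹ ∈ H := fun x hx => hN.conj_mem _ (inv_mem hx) a
  set f := stmtF H hcomm a with hf
  have hRH : ∀ t ∈ f.range, t ∈ H := by
    rintro t ⟨⟨x, hx⟩, rfl⟩
    exact mul_mem hx (hconj x hx)
  -- conjugation by a and a⁻¹ preserves the range of f
  have hconjR : ∀ t ∈ f.range, a * t * a⁻¹ ∈ f.range := by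
    rintro t ⟨⟨x, hx⟩, rfl⟩
    refine ⟨⟨a * x * a⁻¹, hN.conj_mem x hx a⟩, ?_⟩
    show (a * x * a⁻¹) * (a * (a * x * a⁻¹)⁻¹ * a⁻¹) = a * (x * (a * x⁻¹ * a⁻¹)) * a⁻¹
    group
  have hconjR' : ∀ t ∈ f.range, a⁻¹ * t * a ∈ f.range := by
    rintro t ⟨⟨x, hx⟩, rfl⟩
    refine ⟨⟨a⁻¹ * x * a, by simpa using hN.conj_mem x hx a⁻¹⟩, ?_⟩
    show (a⁻¹ * x * a) * (a * (a⁻¹ * x * a)⁻¹ * a⁻¹) = a⁻¹ * (x * (a * x⁻¹ * a⁻¹)) * a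
    group
  -- conjugation by elements of H
  have hHcase : ∀ x ∈ H, ∀ z : G, z * (h * a)⁻¹ ∈ f.range →
      (x * z * x⁻¹) * (h * a)⁻¹ ∈ f.range := by
    intro x hx z hz
    set t := z * (h * a)⁻¹ with ht
    have hz' : z = t * (h * a) := by rw [ht]; group
    have htH : t ∈ H := hRH t hz
    have c1 : x * t = t * x := hc _ _ hx htH
    have c2 : h * (a * x⁻¹ * a⁻¹) = (a * x⁻¹ * a⁻¹) * h := hc _ _ hh (hconj x hx)
    have e : (x * z * x⁻¹) * (h * a)⁻¹ = t * (x * (a * x⁻¹ * a⁻¹)) := by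
      rw [hz']
      calc x * (t * (h * a)) * x⁻¹ * (h * a)⁻¹
          = x * t * (h * (a * x⁻¹ * a⁻¹) * h⁻¹) := by group
        _ = x * t * ((a * x⁻¹ * a⁻¹) * h * h⁻¹) := by rw [c2]
        _ = x * t * (a * x⁻¹ * a⁻¹) := by group
        _ = t * x * (a * x⁻¹ * a⁻¹) := by rw [c1]
        _ = t * (x * (a * x⁻¹ * a⁻¹)) := by group
    rw [e]
    exact mul_mem hz ⟨⟨x, hx⟩, rfl⟩
  -- conjugation by a
  have hAcase : ∀ z : G, z * (h * a)⁻¹ ∈ f.range →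
      (a * z * a⁻¹) * (h * a)⁻¹ ∈ f.range := by
    intro z hz
    set t := z * (h * a)⁻¹ with ht
    have hz' : z = t * (h * a) := by rw [ht]; group
    have e : (a * z * a⁻¹) * (h * a)⁻¹ = (a * t * a⁻¹) * (h * (a * h⁻¹ * a⁻¹))⁻¹ := by
      rw [hz']; group
    rw [e]
    exact mul_mem (hconjR t hz) (inv_mem ⟨⟨h, hh⟩, rfl⟩)
  -- conjugation by a⁻¹
  have hAcase' : ∀ z : G, z * (h * a)⁻¹ ∈ f.range →
      (a⁻¹ * z * a) * (h * a)⁻¹ ∈ f.range := by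
    intro z hz
    set t := z * (h * a)⁻¹ with ht
    have hz' : z = t * (h * a) := by rw [ht]; group
    have e : (a⁻¹ * z * a) * (h * a)⁻¹ =
        (a⁻¹ * t * a) * ((a⁻¹ * h * a) * (a * (a⁻¹ * h * a)⁻¹ * a⁻¹)) := by
      rw [hz']; group
    rw [e]
    exact mul_mem (hconjR' t hz) ⟨⟨a⁻¹ * h * a, by simpa using hN.conj_mem h hh a⁻¹⟩, rfl⟩
  -- stability under conjugation by any element
  have hstab : ∀ c : G,
      (∀ z : G, z * (h * a)⁻¹ ∈ f.range → (c * z * c⁻¹) * (h * a)⁻¹ ∈ f.range) ∧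
      (∀ z : G, z * (h * a)⁻¹ ∈ f.range → (c⁻¹ * z * c) * (h * a)⁻¹ ∈ f.range) := by
    intro c
    have hcmem : c ∈ Subgroup.closure ((H : Set G) ∪ {a}) := by
      rw [Subgroup.closure_union, Subgroup.closure_eq, ← Subgroup.zpowers_eq_closure, hsup]
      exact Subgroup.mem_top c
    induction hcmem using Subgroup.closure_induction with
    | mem x hx =>
      rcases hx with hx | hx
      · constructor
        · exact hHcase x hx
        · intro z hz
          have := hHcase x⁻¹ (inv_mem hx) z hz
          simpa using this
      · rcases hx with rfl
        exact ⟨hAcase, hAcase'⟩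
    | one => constructor <;> intro z hz <;> simpa using hz
    | mul b c hb' hc' ihb ihc =>
      constructor
      · intro z hz
        have e : (b * c) * z * (b * c)⁻¹ = b * (c * z * c⁻¹) * b⁻¹ := by group
        rw [e]
        exact ihb.1 _ (ihc.1 z hz)
      · intro z hz
        have e : (b * c)⁻¹ * z * (b * c) = c⁻¹ * (b⁻¹ * z * b) * c := by group
        rw [e]
        exact ihc.2 _ (ihb.2 z hz)
    | inv b hb' ihb =>
      constructor
      · intro z hz
        have := ihb.2 z hz
        simpa using this
      intro z hz
      have := ihb.1 z hz
      simpa using this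
  constructor
  · rw [isConj_iff]
    rintro ⟨c, rfl⟩
    exact (hstab c).1 (h * a) (by rw [mul_inv_cancel]; exact one_mem f.range)
  · rintro ⟨⟨x, hx⟩, hfx⟩
    rw [isConj_iff]
    refine ⟨x, ?_⟩
    have hy' : y = (x * (a * x⁻¹ * a⁻¹)) * (h * a) := by
      have : (x : G) * (a * x⁻¹ * a⁻¹) = y * (h * a)⁻¹ := hfx
      rw [this]; group
    rw [hy']
    have c2 : h * (a * x⁻¹ * a⁻¹) = (a * x⁻¹ * a⁻¹) * h := hc _ _ hh (hconj x hx)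
    calc x * (h * a) * x⁻¹ = x * (h * (a * x⁻¹ * a⁻¹)) * a := by group
      _ = x * ((a * x⁻¹ * a⁻¹) * h) * a := by rw [c2]
      _ = (x * (a * x⁻¹ * a⁻¹)) * (h * a) := by group

end AuxStmt1

open scoped commutatorElement

theorem stmt_1 {G : Type*} [Group G] [Finite G] (H : Subgroup G) [H.Normal]
    (hcomm : ∀ x y : H, x * y = y * x) (a : G)
    (hcop : Nat.Coprime (Nat.card H) (orderOf a))
    (hsup : H ⊔ Subgroup.zpowers a = ⊤) (hinf : H ⊓ Subgroup.zpowers a = ⊥) :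
    ∀ h ∈ H, convClassSize (h * a) = convClassSize a ∧
      convClassSize a = (Subgroup.centralizer {a}).relIndex H := by
  intro h hh
  set f := stmtF H hcomm a with hf
  have key : ∀ h' : G, h' ∈ H → convClassSize (h' * a) = Nat.card f.range := by
    intro h' hh'
    exact Nat.card_congr (Equiv.subtypeEquiv (Equiv.mulRight (h' * a)⁻¹)
      (fun y => stmt1_key H hcomm a hsup hh' y))
  have hker : f.ker = (Subgroup.centralizer {a}).subgroupOf H := by
    ext x
    rw [MonoidHom.mem_ker, Subgroup.mem_subgroupOf, Subgroup.mem_centralizer_iff]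
    have e : f x = ⁅(x : G), a⁆ := by
      rw [hf, stmtF_apply]; group
    rw [e, commutatorElement_eq_one_iff_mul_comm]
    constructor
    · intro hcm g hg
      rw [Set.mem_singleton_iff] at hg
      subst hg
      exact hcm.symm
    · intro hcm
      exact (hcm a rfl).symm
  have hrange : Nat.card f.range = (Subgroup.centralizer {a}).relIndex H := by
    rw [Subgroup.relIndex, ← hker, Subgroup.index_eq_card]
    exact (Nat.card_congr (QuotientGroup.quotientKerEquivRange f).toEquiv).symm
  have k1 := key h hh
  have k2 := key 1 (one_mem H)
  rw [one_mul] at k2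
  exact ⟨k1.trans k2.symm, k2.trans hrange⟩
end

section
/- Let G = H ⋊ ⟨a⟩ with H abelian normal and gcd(|H|, ord(a)) = 1, n = ord(a), h ∈ H, and t = ord(h*a)/n. Then ⟨(h*a)^t⟩ is a complement to H in G, i.e., G = H ⋊ ⟨(h*a)^t⟩. -/
theorem stmt_3 {G : Type*} [Group G] [Finite G] (H : Subgroup G) [H.Normal]
    (hcomm : ∀ x y : H, x * y = y * x) (a : G)
    (hcop : Nat.Coprime (Nat.card H) (orderOf a))
    (hsup : H ⊔ Subgroup.zpowers a = ⊤) (hinf : H ⊓ Subgroup.zpowers a = ⊥) :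
    ∀ h ∈ H,
      H ⊔ Subgroup.zpowers ((h * a) ^ (orderOf (h * a) / orderOf a)) = ⊤ ∧
      H ⊓ Subgroup.zpowers ((h * a) ^ (orderOf (h * a) / orderOf a)) = ⊥ := by
  intro h hh
  set n := orderOf a with hn
  set b := h * a with hb
  set m := orderOf b with hm
  have hn0 : 0 < n := by
    have := Nat.card_pos (α := G)
    exact orderOf_pos a
  have hm0 : 0 < m := orderOf_pos b
  -- quotient map
  set π := QuotientGroup.mk' H with hπ
  have hπa : orderOf (π a) = n := by
    refine Nat.dvd_antisymm (orderOf_map_dvd π a) ?_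
    apply orderOf_dvd_of_pow_eq_one
    have h1 : π (a ^ orderOf (π a)) = 1 := by
      rw [map_pow, pow_orderOf_eq_one]
    have h2 : a ^ orderOf (π a) ∈ H := (QuotientGroup.eq_one_iff _).mp h1
    have h3 : a ^ orderOf (π a) ∈ H ⊓ Subgroup.zpowers a :=
      ⟨h2, ⟨(orderOf (π a) : ℤ), by simp [zpow_natCast]⟩⟩
    rw [hinf] at h3
    exact h3
  have hπb : π b = π a := by
    have h1 : π h = 1 := (QuotientGroup.eq_one_iff h).mpr hh
    rw [hb, map_mul, h1, one_mul]
  have hnm : n ∣ m := by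
    have := orderOf_map_dvd π b
    rwa [hπb, hπa] at this
  set t := m / n with ht
  have hmt : m = n * t := (Nat.mul_div_cancel' hnm).symm
  have ht0 : 0 < t := by
    rcases Nat.eq_zero_or_pos t with h0 | h0
    · rw [h0, Nat.mul_zero] at hmt; omega
    · exact h0
  have hbnH : b ^ n ∈ H := by
    apply (QuotientGroup.eq_one_iff _).mp
    show π (b ^ n) = 1
    rw [map_pow, hπb, ← hπa, pow_orderOf_eq_one]
  have hobn : orderOf (b ^ n) = t := by
    rw [orderOf_pow, ← hm, Nat.gcd_eq_right hnm, ht]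
  have htH : t ∣ Nat.card H := by
    rw [← hobn]
    have : orderOf (⟨b ^ n, hbnH⟩ : H) = orderOf (b ^ n) := by
      rw [← Subgroup.orderOf_coe]
    rw [← this]
    exact orderOf_dvd_natCard _
  have htn : Nat.Coprime t n := Nat.Coprime.coprime_dvd_left htH hcop
  set c := b ^ t with hc
  have hoc : orderOf c = n := by
    rw [hc, orderOf_pow, ← hm, hmt]
    rw [Nat.gcd_eq_right (dvd_mul_left t n), Nat.mul_div_cancel _ ht0]
  constructor
  · -- sup
    obtain ⟨u, v, huv⟩ := Nat.isCoprime_iff_coprime.mpr htn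
    rw [eq_top_iff, ← hsup]
    refine sup_le le_sup_left ?_
    rw [Subgroup.zpowers_le]
    have hbmem : b ∈ H ⊔ Subgroup.zpowers c := by
      have h1 : c ∈ H ⊔ Subgroup.zpowers c := Subgroup.mem_sup_right (Subgroup.mem_zpowers c)
      have h2 : b ^ n ∈ H ⊔ Subgroup.zpowers c := Subgroup.mem_sup_left hbnH
      have hbez : (t : ℤ) * u + (n : ℤ) * v = 1 := by
        rw [mul_comm (t : ℤ) u, mul_comm (n : ℤ) v]; exact huv
      have heq : b = c ^ u * (b ^ n) ^ v := by
        rw [hc, ← zpow_natCast b t, ← zpow_natCast b n, ← zpow_mul, ← zpow_mul,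
          ← zpow_add, hbez, zpow_one]
      rw [heq]
      exact mul_mem (zpow_mem h1 u) (zpow_mem h2 v)
    have ha : a = h⁻¹ * b := by rw [hb]; group
    rw [ha]
    exact mul_mem (Subgroup.mem_sup_left (inv_mem hh)) hbmem
  · -- inf
    rw [eq_bot_iff]
    intro x ⟨hxH, hxc⟩
    have h1 : orderOf x ∣ n := by
      have e : orderOf (⟨x, hxc⟩ : Subgroup.zpowers c) = orderOf x := by
        rw [← Subgroup.orderOf_coe]
      rw [← hoc, ← Nat.card_zpowers c, ← e]
      exact orderOf_dvd_natCard _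
    have h2 : orderOf x ∣ Nat.card H := by
      have : orderOf (⟨x, hxH⟩ : H) = orderOf x := by rw [← Subgroup.orderOf_coe]
      rw [← this]
      exact orderOf_dvd_natCard _
    have : orderOf x = 1 := Nat.eq_one_of_dvd_coprimes hcop h2 h1
    simpa [orderOf_eq_one_iff] using this
end

section
/- Let p be an odd prime, K the direct product of p copies of the cyclic group of order p with generators k_1, ..., k_p, N = ⟨k_1 k_2 ⋯ k_p⟩, and H = K/N. Let α be the p-cycle (1 2 ... p) acting on H by permuting coordinates: (k_1^{x_1}⋯k_p^{x_p})N ↦ (k_{1^α}^{x_1}⋯k_{p^α}^{x_p})N. Then the fixed-point subgroup C_H(α) has order exactly p. -/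
open Multiplicative

lemma permK_apply {p : ℕ} (σ : Equiv.Perm (Fin p)) (x : Kp p) (i : Fin p) :
    permK p σ x i = x (σ.symm i) := rfl

lemma rot_cast {p : ℕ} (j : Fin p) :
    ((finRotate p j).val : ZMod p) = (j.val : ZMod p) + 1 := by
  cases p with
  | zero => exact j.elim0
  | succ n =>
    rw [finRotate_succ_apply, Fin.add_def]
    push_cast [ZMod.natCast_mod]
    norm_num [Fin.val_one', ZMod.natCast_mod]

lemma mem_Np_iff {p : ℕ} [Fact p.Prime] (y : Kp p) :
    y ∈ Np p ↔ ∃ c : ZMod p, ∀ i, toAdd (y i) = c := by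
  haveI : NeZero p := ⟨(Fact.out : p.Prime).ne_zero⟩
  constructor
  · rintro ⟨k, rfl⟩
    exact ⟨(k : ZMod p), fun i => by simp⟩
  · rintro ⟨c, hc⟩
    refine ⟨(c.val : ℤ), funext fun i => ?_⟩
    have : y i = ofAdd c := by rw [← hc i]; rfl
    rw [this]
    simp [Pi.pow_apply, ← ofAdd_zsmul, ZMod.natCast_val, ZMod.cast_id]

lemma fix_mk_iff {p : ℕ} [Fact p.Prime] (x : Kp p) :
    permHhom p (finRotate p) (QuotientGroup.mk x) = QuotientGroup.mk x ↔
      ∃ c : ZMod p, ∀ j, toAdd (x (finRotate p j)) - toAdd (x j) = c := by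
  have h1 : permHhom p (finRotate p) (QuotientGroup.mk x)
      = QuotientGroup.mk (permK p (finRotate p) x) := rfl
  rw [h1, QuotientGroup.eq, mem_Np_iff]
  constructor
  · rintro ⟨c, hc⟩
    refine ⟨c, fun j => ?_⟩
    have := hc (finRotate p j)
    simpa [permK_apply, toAdd_mul, neg_add_eq_sub] using this
  · rintro ⟨c, hc⟩
    refine ⟨c, fun i => ?_⟩
    have := hc ((finRotate p).symm i)
    simpa [permK_apply, toAdd_mul, neg_add_eq_sub] using this

/-- The candidate fixed points. -/
def Dmap (p : ℕ) (c : ZMod p) : Kp p := fun i => ofAdd (c * (i.val : ZMod p))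

lemma Dmap_fixed {p : ℕ} [Fact p.Prime] (c : ZMod p) :
    permHhom p (finRotate p) (QuotientGroup.mk (Dmap p c)) = QuotientGroup.mk (Dmap p c) := by
  rw [fix_mk_iff]
  refine ⟨c, fun j => ?_⟩
  simp only [Dmap, toAdd_ofAdd, rot_cast]
  ring

open Fin.NatCast in
lemma rot_pow_zero {p : ℕ} [NeZero p] (i : Fin p) :
    ((finRotate p) ^ i.val) (0 : Fin p) = i := by
  have key : ∀ m : ℕ, ((finRotate p) ^ m) (0 : Fin p) = (m : Fin p) := by
    intro m
    induction m with
    | zero => simp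
    | succ m ih =>
      rw [pow_succ', Equiv.Perm.mul_apply, ih]
      cases p with
      | zero => exact i.elim0
      | succ n => rw [finRotate_succ_apply]; push_cast; ring
  rw [key, Fin.cast_val_eq_self]

theorem stmt_5 (p : ℕ) [Fact p.Prime] (hodd : Odd p) :
    Nat.card {h : Hp p // permHhom p (finRotate p) h = h} = p := by
  have hp : p.Prime := Fact.out
  haveI : NeZero p := ⟨hp.ne_zero⟩
  set f : ZMod p → {h : Hp p // permHhom p (finRotate p) h = h} :=
    fun c => ⟨QuotientGroup.mk (Dmap p c), Dmap_fixed c⟩ with hf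
  have hinj : Function.Injective f := by
    intro c c' hcc
    have h1 : (QuotientGroup.mk (Dmap p c) : Hp p) = QuotientGroup.mk (Dmap p c') :=
      congrArg Subtype.val hcc
    rw [QuotientGroup.eq, mem_Np_iff] at h1
    obtain ⟨t, ht⟩ := h1
    have key := (ht ⟨1, hp.one_lt⟩).trans (ht 0).symm
    simp [Dmap, toAdd_mul] at key
    linear_combination -key
  have hsurj : Function.Surjective f := by
    rintro ⟨h, hfix⟩
    obtain ⟨x, rfl⟩ := QuotientGroup.mk_surjective h
    rw [fix_mk_iff] at hfix
    obtain ⟨c, hc⟩ := hfix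
    refine ⟨c, Subtype.ext ?_⟩
    show QuotientGroup.mk (Dmap p c) = QuotientGroup.mk x
    rw [QuotientGroup.eq, mem_Np_iff]
    refine ⟨toAdd (x 0), fun i => ?_⟩
    have step : ∀ j : Fin p, toAdd (x (finRotate p j)) - c * ((finRotate p j).val : ZMod p)
        = toAdd (x j) - c * (j.val : ZMod p) := by
      intro j
      rw [rot_cast]
      linear_combination hc j
    have key : ∀ m : ℕ, toAdd (x (((finRotate p) ^ m) (0 : Fin p)))
        - c * (((((finRotate p) ^ m) (0 : Fin p)).val : ℕ) : ZMod p) = toAdd (x 0) := by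
      intro m
      induction m with
      | zero => simp
      | succ m ih => rw [pow_succ', Equiv.Perm.mul_apply, step, ih]
    have key2 := key i.val
    rw [rot_pow_zero] at key2
    simp [Dmap, toAdd_mul]
    linear_combination key2
  have := Nat.card_congr (Equiv.ofBijective f ⟨hinj, hsurj⟩)
  rw [Nat.card_zmod] at this
  exact this.symm
end

section
/- Let p = 2q+1 with p, q primes. Let β = (m_1 ... m_q)(n_1 ... n_q) be a permutation of {1,...,p} fixing 1, where {m_1,...,m_q,n_1,...,n_q} = {2,...,p}. With H = K/N as above (K = (Z/p)^p, N the diagonal), the fixed-point subgroup C_H(β) of the induced action of β on H has order p^2. -/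
theorem stmt_6 (p q : ℕ) [Fact p.Prime] [Fact q.Prime] (hpq : p = 2 * q + 1)
    (β : Equiv.Perm (Fin p)) (m n : Fin q → Fin p)
    (hm : Function.Injective m) (hn : Function.Injective n)
    (hdisj : ∀ i j, m i ≠ n j)
    (hcover : ∀ x : Fin p, x ≠ 0 → (∃ i, m i = x) ∨ (∃ i, n i = x))
    (hβ0 : β 0 = 0)
    (hβm : ∀ i, β (m i) = m (i + 1)) (hβn : ∀ i, β (n i) = n (i + 1))
    :
    Nat.card {h : Hp p // permHhom p β h = h} = p ^ 2 := by
  classical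
  have hq2 : 2 ≤ q := (Fact.out : q.Prime).two_le
  haveI : NeZero q := ⟨(Fact.out : q.Prime).ne_zero⟩
  haveI : NeZero p := ⟨(Fact.out : p.Prime).ne_zero⟩
  -- membership in Np
  have memNp : ∀ x : Kp p, x ∈ Np p ↔ ∃ c, x = fun _ => c := by
    intro x
    constructor
    · rintro ⟨k, hk⟩
      exact ⟨(Multiplicative.ofAdd (1:ZMod p))^k, hk.symm ▸ rfl⟩
    · rintro ⟨c, rfl⟩
      refine ⟨((Multiplicative.toAdd c).val : ℤ), funext fun i => ?_⟩
      show (Multiplicative.ofAdd (1:ZMod p)) ^ ((Multiplicative.toAdd c).val : ℤ) = c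
      rw [← ofAdd_zsmul]
      simp [ZMod.natCast_val, ZMod.cast_id]
  -- a cycle index plus one is distinct
  have findistinct : ∀ j : Fin q, j + 1 ≠ j := by
    intro j h
    have hv := congrArg Fin.val h
    have h1 : (1 : Fin q).val = 1 := by
      rw [Fin.val_one']; exact Nat.mod_eq_of_lt (by omega)
    rw [Fin.val_add, h1] at hv
    rcases Nat.lt_or_ge (j.val + 1) q with hlt2 | hge
    · rw [Nat.mod_eq_of_lt hlt2] at hv; omega
    · have hq : j.val + 1 = q := le_antisymm j.isLt hge
      rw [hq, Nat.mod_self] at hv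
      omega
  -- 0 is not in the range of m or n
  have hm0 : ∀ j, m j ≠ 0 := by
    intro j h
    have h1 : m (j + 1) = m j := by rw [← hβm j, h, hβ0]
    exact findistinct j (hm h1)
  have hn0 : ∀ j, n j ≠ 0 := by
    intro j h
    have h1 : n (j + 1) = n j := by rw [← hβn j, h, hβ0]
    exact findistinct j (hn h1)
  -- fixedness of mk f characterized by invariance of f
  have hfixmk : ∀ f : Kp p, permHhom p β (QuotientGroup.mk f) = QuotientGroup.mk f ↔
      ∀ i, f (β i) = f i := by
    intro f
    have hr : permHhom p β (QuotientGroup.mk f)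
        = QuotientGroup.mk (fun i => f (β.symm i)) := rfl
    rw [hr, QuotientGroup.eq]
    constructor
    · intro h i
      rw [memNp] at h
      obtain ⟨c, hc⟩ := h
      have hc' : ∀ i, (f (β.symm i))⁻¹ * f i = c := fun i => congrFun hc i
      have h0 : (f (β.symm 0))⁻¹ * f 0 = c := hc' 0
      have hs0 : β.symm 0 = 0 := by
        conv_lhs => rw [← hβ0]
        exact β.symm_apply_apply 0
      rw [hs0, inv_mul_cancel] at h0
      have := hc' (β i)
      rw [β.symm_apply_apply, ← h0] at this
      exact (inv_mul_eq_one.mp this).symm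
    · intro h
      rw [memNp]
      refine ⟨1, funext fun i => ?_⟩
      have := h (β.symm i)
      rw [β.apply_symm_apply] at this
      show (f (β.symm i))⁻¹ * f i = 1
      rw [this, inv_mul_cancel]
  -- invariant f is constant on the m-cycle and n-cycle
  have hconst : ∀ (f : Kp p), (∀ i, f (β i) = f i) →
      (∀ j, f (m j) = f (m 0)) ∧ (∀ j, f (n j) = f (n 0)) := by
    intro f hf
    open Fin.NatCast in
    have key : ∀ (g : Fin q → Fin p), (∀ i, β (g i) = g (i+1)) →
        ∀ k : ℕ, f (g (k : Fin q)) = f (g 0) := by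
      intro g hg k
      induction k with
      | zero => simp
      | succ k ih =>
        have : ((k+1 : ℕ) : Fin q) = (k : Fin q) + 1 := by push_cast; ring
        rw [this, ← hg, hf]
        exact ih
    constructor
    · intro j
      have := key m hβm j.val
      rwa [Fin.cast_val_eq_self] at this
    · intro j
      have := key n hβn j.val
      rwa [Fin.cast_val_eq_self] at this
  -- the standard representative
  set g : Multiplicative (ZMod p) → Multiplicative (ZMod p) → Kp p :=
    fun b c i => if ∃ j, m j = i then b else if ∃ j, n j = i then c else 1 with hg
  have hgm : ∀ b c j, g b c (m j) = b := by
    intro b c j; simp only [hg]; rw [if_pos ⟨j, rfl⟩]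
  have hgn : ∀ b c j, g b c (n j) = c := by
    intro b c j; simp only [hg]
    rw [if_neg, if_pos ⟨j, rfl⟩]
    rintro ⟨j', hj'⟩; exact hdisj j' j hj'
  have hg0 : ∀ b c, g b c 0 = 1 := by
    intro b c; simp only [hg]
    rw [if_neg, if_neg]
    · rintro ⟨j, hj⟩; exact hn0 j hj
    · rintro ⟨j, hj⟩; exact hm0 j hj
  -- g b c is invariant
  have hginv : ∀ b c i, g b c (β i) = g b c i := by
    intro b c i
    rcases eq_or_ne i 0 with rfl | hi
    · rw [hβ0]
    rcases hcover i hi with ⟨j, rfl⟩ | ⟨j, rfl⟩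
    · rw [hβm, hgm, hgm]
    · rw [hβn, hgn, hgn]
  -- the bijection
  set F : Multiplicative (ZMod p) × Multiplicative (ZMod p) →
      {h : Hp p // permHhom p β h = h} :=
    fun bc => ⟨QuotientGroup.mk (g bc.1 bc.2), (hfixmk _).mpr (hginv bc.1 bc.2)⟩ with hF
  have hFbij : Function.Bijective F := by
    constructor
    · rintro ⟨b, c⟩ ⟨b', c'⟩ h
      have h1 : (QuotientGroup.mk (g b c) : Hp p) = QuotientGroup.mk (g b' c') :=
        congrArg Subtype.val h
      rw [QuotientGroup.eq, memNp] at h1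
      obtain ⟨c0, hc0⟩ := h1
      have hc0' : ∀ i, (g b c i)⁻¹ * g b' c' i = c0 := fun i => congrFun hc0 i
      have h0 := hc0' 0
      rw [hg0, hg0, inv_one, one_mul] at h0
      have hb := hc0' (m 0)
      rw [hgm, hgm, ← h0] at hb
      have hc := hc0' (n 0)
      rw [hgn, hgn, ← h0] at hc
      have hb' : b = b' := inv_mul_eq_one.mp hb
      have hc' : c = c' := inv_mul_eq_one.mp hc
      rw [Prod.mk.injEq]
      exact ⟨hb', hc'⟩
    · rintro ⟨h, hfix⟩
      obtain ⟨f, rfl⟩ := QuotientGroup.mk_surjective h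
      have hf := (hfixmk f).mp hfix
      obtain ⟨hcm, hcn⟩ := hconst f hf
      refine ⟨⟨f (m 0) * (f 0)⁻¹, f (n 0) * (f 0)⁻¹⟩, ?_⟩
      apply Subtype.ext
      show (QuotientGroup.mk (g _ _) : Hp p) = QuotientGroup.mk f
      rw [QuotientGroup.eq, memNp]
      refine ⟨f 0, funext fun i => ?_⟩
      show (g _ _ i)⁻¹ * f i = f 0
      rcases eq_or_ne i 0 with rfl | hi
      · rw [hg0, inv_one, one_mul]
      rcases hcover i hi with ⟨j, rfl⟩ | ⟨j, rfl⟩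
      · rw [hgm, hcm j]; group
      · rw [hgn, hcn j]; group
  have := Nat.card_eq_of_bijective F hFbij
  rw [← this]
  simp [Nat.card_eq_fintype_card, sq]
end

section
/- Let p = 2q+1 with p, q primes, and G = H ⋊ (A ⋊ B) where H = K/N (K = (Z/p)^p, N the diagonal), A = ⟨α⟩ with α the p-cycle (1 2 ... p), B = ⟨β⟩ with β a product of two disjoint q-cycles fixing 1 such that α^β = α^r for some 1 < r < q with r^q ≡ 1 (mod p), and A ⋊ B acts on H by permuting coordinates. Then the center of G is trivial. -/
lemma fixed_spec (p : ℕ) (σ : Equiv.Perm (Fin p)) (k : Kp p)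
    (h : permH p σ (QuotientGroup.mk k) = QuotientGroup.mk k) :
    ∃ z : ℤ, ∀ i, Multiplicative.toAdd (k i) - Multiplicative.toAdd (k (σ⁻¹ i)) = (z : ZMod p) := by
  have h' : (QuotientGroup.mk (permK p σ k) : Hp p) = QuotientGroup.mk k := h
  rw [QuotientGroup.eq] at h'
  obtain ⟨z, hz⟩ := Subgroup.mem_zpowers_iff.mp h'
  refine ⟨z, fun i => ?_⟩
  have := congrFun hz i
  have h2 := congrArg Multiplicative.toAdd this
  simp only [Pi.pow_apply, toAdd_zpow, toAdd_ofAdd, zsmul_eq_mul, mul_one, Pi.mul_apply,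
    Pi.inv_apply, toAdd_mul, toAdd_inv] at h2
  -- h2 : z = -(toAdd ((permK p σ k) i)) + toAdd (k i)  (in some form)
  rw [h2]; abel


lemma finRotate_apply' (p : ℕ) [NeZero p] (i : Fin p) : finRotate p i = i + 1 := by
  obtain ⟨n, rfl⟩ := Nat.exists_eq_succ_of_ne_zero (NeZero.ne p)
  exact finRotate_succ_apply i

lemma perm_eq_one (p : ℕ) [Fact p.Prime] (hp3 : 3 ≤ p) (f : Equiv.Perm (Fin p))
    (hf : ∀ h : Hp p, permH p f h = h) : f = 1 := by
  refine Equiv.ext fun j => ?_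
  show f j = j
  by_contra hj
  set k : Kp p := fun i => Multiplicative.ofAdd (if i = j then (1 : ZMod p) else 0) with hk
  obtain ⟨z, hz⟩ := fixed_spec p f k (hf _)
  have hinv : f⁻¹ j ≠ j := fun h => hj ((congrArg f h).symm.trans (Equiv.apply_symm_apply f j))
  have h1 := hz j
  have h2 := hz (f j)
  rw [Equiv.Perm.inv_def, Equiv.symm_apply_apply] at h2
  simp only [hk, toAdd_ofAdd, if_pos rfl, if_neg hinv, if_neg hj] at h1 h2
  -- h1 : 1 - 0 = z ; h2 : 0 - 1 = z
  have : (1 : ZMod p) - 0 = 0 - 1 := h1.trans h2.symm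
  have h20 : ((2 : ℕ) : ZMod p) = 0 := by push_cast; linear_combination this
  rw [ZMod.natCast_eq_zero_iff] at h20
  have := Nat.le_of_dvd (by norm_num) h20
  omega

open Fin.NatCast in
lemma const_of_fixed (p : ℕ) [Fact p.Prime] (β : Equiv.Perm (Fin p))
    (a b : Fin p) (hab : a ≠ b) (hβ0 : β 0 = 0) (hβa : β a = b) (k : Kp p)
    (hα : permH p (finRotate p) (QuotientGroup.mk k) = QuotientGroup.mk k)
    (hβ : permH p β (QuotientGroup.mk k) = QuotientGroup.mk k) :
    (QuotientGroup.mk k : Hp p) = 1 := by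
  have hp0 : p ≠ 0 := (Fact.out : p.Prime).ne_zero
  set e : Fin p → ZMod p := fun i => Multiplicative.toAdd (k i) with he
  obtain ⟨w, hw⟩ := fixed_spec p (finRotate p) k hα
  obtain ⟨z, hz⟩ := fixed_spec p β k hβ
  have hβinv : β⁻¹ 0 = 0 := (congrArg (fun x => β⁻¹ x) hβ0).symm.trans (Equiv.symm_apply_apply β 0)
  have hz0 : (z : ZMod p) = 0 := by
    have := hz 0
    rw [hβinv] at this
    simpa using this.symm
  have hkβ : ∀ i, e (β i) = e i := by
    intro i
    have := hz (β i)
    rw [Equiv.Perm.inv_def, Equiv.symm_apply_apply, hz0, sub_eq_zero] at this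
    exact this
  have hab' : e b = e a := by rw [← hβa, hkβ]
  have hstep : ∀ i : Fin p, e (i + 1) = e i + (w : ZMod p) := by
    intro i
    have h1 := hw (i + 1)
    have h2 : (finRotate p)⁻¹ (i + 1) = i := by
      rw [← finRotate_apply' p i, Equiv.Perm.inv_def, Equiv.symm_apply_apply]
    rw [h2, sub_eq_iff_eq_add] at h1
    show Multiplicative.toAdd (k (i + 1)) = Multiplicative.toAdd (k i) + (w : ZMod p)
    rw [h1]; ring
  have haff : ∀ v : ℕ, e ((v : Fin p)) = e 0 + (v : ZMod p) * (w : ZMod p) := by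
    intro v
    induction v with
    | zero => simp
    | succ v ih =>
      have : ((v + 1 : ℕ) : Fin p) = (v : Fin p) + 1 := by push_cast; ring
      rw [this, hstep, ih]; push_cast; ring
  have hval : ∀ i : Fin p, e i = e 0 + (i.val : ZMod p) * (w : ZMod p) := by
    intro i
    have := haff i.val
    rwa [Fin.cast_val_eq_self] at this
  have hw0 : (w : ZMod p) = 0 := by
    have h1 := hval a
    have h2 := hval b
    rw [hab', h1] at h2
    have h3 : (((a.val : ZMod p)) - (b.val : ZMod p)) * (w : ZMod p) = 0 := by
      linear_combination h2
    rcases mul_eq_zero.mp h3 with h | h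
    · exfalso
      rw [sub_eq_zero] at h
      have := congrArg ZMod.val h
      rw [ZMod.val_cast_of_lt a.isLt, ZMod.val_cast_of_lt b.isLt] at this
      exact hab (Fin.ext this)
    · exact h
  have hconst : ∀ i, e i = e 0 := by
    intro i; rw [hval i, hw0, mul_zero, add_zero]
  rw [QuotientGroup.eq_one_iff]
  rw [Np, Subgroup.mem_zpowers_iff]
  refine ⟨((e 0).val : ℤ), funext fun i => ?_⟩
  apply Multiplicative.toAdd.injective
  simp only [Pi.pow_apply, toAdd_zpow, toAdd_ofAdd, zsmul_eq_mul, mul_one]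
  push_cast
  rw [ZMod.natCast_val, ZMod.cast_id]
  exact (hconst i).symm

theorem stmt_10 (p q : ℕ) [Fact p.Prime] [Fact q.Prime] (hpq : p = 2 * q + 1)
    (β : Equiv.Perm (Fin p)) (m n : Fin q → Fin p)
    (hm : Function.Injective m) (hn : Function.Injective n)
    (hdisj : ∀ i j, m i ≠ n j)
    (hcover : ∀ x : Fin p, x ≠ 0 → (∃ i, m i = x) ∨ (∃ i, n i = x))
    (hβ0 : β 0 = 0)
    (hβm : ∀ i, β (m i) = m (i + 1)) (hβn : ∀ i, β (n i) = n (i + 1))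
    (r : ℕ) (hr1 : 1 < r) (hr2 : r < q) (hrq : r ^ q ≡ 1 [MOD p])
    (hβα : β⁻¹ * finRotate p * β = (finRotate p) ^ r)
    :
    Subgroup.center (Ggrp p β) = ⊥ := by
  have hq2 : 2 ≤ q := (Fact.out : q.Prime).two_le
  have hp3 : 3 ≤ p := by omega
  rw [eq_bot_iff]
  intro x hx
  rw [Subgroup.mem_center_iff] at hx
  rw [Subgroup.mem_bot]
  set φ := (permHhom p).comp (Fsub p β).subtype with hφ
  -- Step 1 : the right component acts trivially on H
  have hfix : ∀ h' : Hp p, permH p ((x.right : Equiv.Perm (Fin p))) h' = h' := by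
    intro h'
    have h1 := congrArg SemidirectProduct.left (hx (SemidirectProduct.inl h'))
    simp only [SemidirectProduct.mul_left, SemidirectProduct.left_inl,
      SemidirectProduct.right_inl, map_one, MulAut.one_apply] at h1
    -- h1 : h' * x.left = x.left * φ x.right h'
    have h2 : x.left * h' = x.left * (φ x.right) h' := by
      rw [mul_comm x.left h']; exact h1
    have h3 := mul_left_cancel h2
    exact h3.symm
  have hright : x.right = 1 := Subtype.ext (perm_eq_one p hp3 _ hfix)
  -- Step 2 : the left component is fixed by all of F
  have hfix2 : ∀ f' : Fsub p β, permH p ((f' : Equiv.Perm (Fin p))) x.left = x.left := by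
    intro f'
    have h1 := congrArg SemidirectProduct.left (hx (SemidirectProduct.inr f'))
    simp only [SemidirectProduct.mul_left, SemidirectProduct.left_inr, map_one, mul_one,
      one_mul] at h1
    exact h1
  have hαmem : finRotate p ∈ Fsub p β := Subgroup.subset_closure (Set.mem_insert _ _)
  have hβmem : β ∈ Fsub p β := Subgroup.subset_closure (Set.mem_insert_of_mem _ rfl)
  have h01 : (0 : Fin q) ≠ 0 + 1 := by
    intro h
    have := congrArg Fin.val h
    simp [Fin.val_add, Fin.val_one'] at this
    omega
  have hab : m 0 ≠ m (0 + 1) := fun h => h01 (hm h)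
  have hleft : x.left = 1 := by
    obtain ⟨k, hk⟩ := QuotientGroup.mk_surjective x.left
    rw [← hk]
    refine const_of_fixed p β (m 0) (m (0 + 1)) hab hβ0 (hβm 0) k ?_ ?_
    · rw [hk]; exact hfix2 ⟨finRotate p, hαmem⟩
    · rw [hk]; exact hfix2 ⟨β, hβmem⟩
  calc x = ⟨x.left, x.right⟩ := rfl
    _ = ⟨1, 1⟩ := by rw [hleft, hright]
    _ = 1 := rfl
end

section
/- Let p = 2q+1 with p, q primes, H = K/N as in the main construction, and A = ⟨a⟩ with a acting on H as the p-cycle coordinate permutation. Then for every h ∈ H, the element ha in the semidirect product H ⋊ A has order p. -/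
section Aux
open Fin.NatCast Fin.CommRing
variable {N G : Type*} [CommGroup N] [Group G] {φ : G →* MulAut N}

lemma pow_right' (h : N) (g : G) (n : ℕ) :
    ((SemidirectProduct.inl h * SemidirectProduct.inr g : N ⋊[φ] G) ^ n).right = g ^ n := by
  induction n with
  | zero => simp
  | succ n ih => rw [pow_succ]; simp [ih, pow_succ]

lemma pow_left' (h : N) (g : G) (n : ℕ) :
    ((SemidirectProduct.inl h * SemidirectProduct.inr g : N ⋊[φ] G) ^ n).left =
      ∏ i ∈ Finset.range n, φ (g ^ i) h := by
  induction n with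
  | zero => simp
  | succ n ih => rw [pow_succ]; simp [ih, pow_right', Finset.prod_range_succ]

lemma finRotate_pow_apply (n i : ℕ) (j : Fin (n + 1)) :
    ((finRotate (n + 1)) ^ i) j = j + (i : Fin (n+1)) := by
  induction i with
  | zero => simp
  | succ i ih =>
      rw [pow_succ', Equiv.Perm.mul_apply, ih, finRotate_succ_apply]
      push_cast
      ring

end Aux
open Fin.NatCast Fin.CommRing in
theorem stmt_12 (p q : ℕ) [Fact p.Prime] [Fact q.Prime] (hpq : p = 2 * q + 1)
    :
    ∀ h : Hp p,
      orderOf (SemidirectProduct.inl h * SemidirectProduct.inr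
        (⟨finRotate p, Subgroup.mem_zpowers _⟩ : Subgroup.zpowers (finRotate p)) : Pgrp p)
        = p := by
  have hp2 : 2 ≤ p := (Fact.out : p.Prime).two_le
  obtain ⟨m, rfl⟩ : ∃ m, p = m + 1 := ⟨p - 1, by omega⟩
  intro h
  refine QuotientGroup.induction_on h ?_
  intro k
  set g : Subgroup.zpowers (finRotate (m + 1)) :=
    ⟨finRotate (m + 1), Subgroup.mem_zpowers _⟩ with hg
  set x : Pgrp (m + 1) :=
    SemidirectProduct.inl (QuotientGroup.mk k) * SemidirectProduct.inr g with hx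
  have hrot : (finRotate (m + 1)) ^ (m + 1) = 1 := by
    ext j
    rw [finRotate_pow_apply]
    simp
  have hxp : x ^ (m + 1) = 1 := by
    refine SemidirectProduct.ext ?_ ?_
    · rw [hx, pow_left']
      have hcomp : ∀ i : ℕ,
          ((permHhom (m + 1)).comp (Subgroup.zpowers (finRotate (m + 1))).subtype) (g ^ i)
            (QuotientGroup.mk k) =
            QuotientGroup.mk (permK (m + 1) ((finRotate (m + 1)) ^ i) k) := by
        intro i; rfl
      simp only [hcomp]
      rw [show (∏ i ∈ Finset.range (m + 1),
            (QuotientGroup.mk (permK (m + 1) ((finRotate (m + 1)) ^ i) k) : Hp (m + 1))) =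
          QuotientGroup.mk (∏ i ∈ Finset.range (m + 1), permK (m + 1) ((finRotate (m + 1)) ^ i) k)
          from (map_prod (QuotientGroup.mk' (Np (m + 1))) _ _).symm]
      rw [SemidirectProduct.one_left, QuotientGroup.eq_one_iff]
      have hfun : (∏ i ∈ Finset.range (m + 1), permK (m + 1) ((finRotate (m + 1)) ^ i) k) =
          fun _ => ∏ t : Fin (m + 1), k t := by
        funext j
        rw [Finset.prod_apply]
        have h1 : ∀ i : ℕ,
            (permK (m + 1) ((finRotate (m + 1)) ^ i) k) j = k (j - (i : Fin (m + 1))) := by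
          intro i
          show k (((finRotate (m + 1)) ^ i).symm j) = k (j - (i : Fin (m + 1)))
          congr 1
          rw [Equiv.symm_apply_eq, finRotate_pow_apply]
          ring
        simp only [h1]
        rw [← Fin.prod_univ_eq_prod_range (fun i : ℕ => k (j - (i : Fin (m + 1)))) (m + 1)]
        rw [show (fun t : Fin (m + 1) => k (j - ((t : ℕ) : Fin (m + 1)))) =
            fun t : Fin (m + 1) => k (j - t) by funext t; simp]
        exact Fintype.prod_equiv (Equiv.subLeft j) _ _ (fun t => rfl)
      rw [hfun, Np, Subgroup.mem_zpowers_iff]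
      refine ⟨((Multiplicative.toAdd (∏ t : Fin (m + 1), k t)).val : ℤ), ?_⟩
      funext j
      rw [Pi.pow_apply]
      simp [← ofAdd_zsmul, ZMod.natCast_val, ZMod.cast_id]
    · rw [hx, pow_right']
      simp only [SemidirectProduct.one_right]
      ext
      simp [hg, hrot]
  have hdvd : orderOf x ∣ m + 1 := orderOf_dvd_of_pow_eq_one hxp
  rcases ((Fact.out : (m + 1).Prime).eq_one_or_self_of_dvd _ hdvd) with h1 | h1
  · exfalso
    rw [orderOf_eq_one_iff] at h1
    have hgr : g = 1 := by
      have := congrArg SemidirectProduct.right h1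
      simpa [hx] using this
    have : finRotate (m + 1) = 1 := by
      simpa [hg, Subtype.ext_iff] using hgr
    have h0 := congrArg (fun σ : Equiv.Perm (Fin (m + 1)) => σ 0) this
    simp only [finRotate_succ_apply, Equiv.Perm.one_apply, zero_add] at h0
    have := congrArg Fin.val h0
    simp [Fin.val_one, Fin.val_zero] at this
    omega
  · exact h1
end

section
/- Let p = 2q+1 with p, q primes and G = H ⋊ (A ⋊ B) as in the main construction. Then the set of conjugacy class sizes of elements of H in G is exactly {1, p, q, pq}. -/
open Fin.NatCast Fin.CommRing

section Gen

lemma frp_pow {n : ℕ} (j : ℕ) (x : Fin (n+1)) :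
    ((finRotate (n+1)) ^ j) x = x + (j : Fin (n+1)) := by
  induction j generalizing x with
  | zero => simp
  | succ k ih =>
      rw [pow_succ, Equiv.Perm.mul_apply, ih, finRotate_succ_apply]
      push_cast
      ring

lemma frp_pow_self {n : ℕ} : (finRotate (n+1)) ^ (n+1) = 1 := by
  ext x
  simp [frp_pow, Fin.natCast_self]

lemma frp_mod {n : ℕ} (j : ℕ) :
    (finRotate (n+1)) ^ j = (finRotate (n+1)) ^ (j % (n+1)) := by
  conv_lhs => rw [← Nat.div_add_mod j (n+1)]
  rw [pow_add, pow_mul, frp_pow_self, one_pow, one_mul]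

lemma frp_pow_eq_iff {n : ℕ} (j k : ℕ) :
    (finRotate (n+1)) ^ j = (finRotate (n+1)) ^ k ↔ j % (n+1) = k % (n+1) := by
  constructor
  · intro h
    have h2 := congrArg (fun f : Equiv.Perm (Fin (n+1)) => f 0) h
    simp only [frp_pow, zero_add] at h2
    have h3 := congrArg Fin.val h2
    simpa [Fin.val_natCast] using h3
  · intro h
    rw [frp_mod j, frp_mod k, h]

lemma conj_pow_nat {G : Type*} [Group G] (a b : G) (k : ℕ) :
    (b⁻¹ * a * b) ^ k = b⁻¹ * a ^ k * b := by
  induction k with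
  | zero => simp
  | succ k ih => rw [pow_succ, ih, pow_succ]; group

/-- vectors as elements of `Kp` -/
def ofv {P : ℕ} (v : Fin P → ZMod P) : Kp P := fun i => Multiplicative.ofAdd (v i)

lemma mk_eq {P : ℕ} [NeZero P] (v w : Fin P → ZMod P) :
    ((ofv v : Kp P) : Hp P) = ((ofv w : Kp P) : Hp P) ↔ ∃ c : ZMod P, ∀ i, w i = v i + c := by
  rw [QuotientGroup.eq]
  rw [Np, Subgroup.mem_zpowers_iff]
  constructor
  · rintro ⟨k, hk⟩
    refine ⟨((k : ℤ) : ZMod P), fun i => ?_⟩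
    have h := congrFun hk i
    have h2 : Multiplicative.ofAdd ((k : ℤ) • (1 : ZMod P))
        = Multiplicative.ofAdd (-(v i) + w i) := h
    have h3 : (k : ℤ) • (1 : ZMod P) = -(v i) + w i := Multiplicative.ofAdd.injective h2
    have h4 : ((k : ℤ) : ZMod P) = -(v i) + w i := by
      rw [← h3]; simp [zsmul_eq_mul]
    linear_combination -h4
  · rintro ⟨c, hc⟩
    refine ⟨(c.val : ℤ), ?_⟩
    funext i
    show Multiplicative.ofAdd (((c.val : ℕ) : ℤ) • (1 : ZMod P))
        = Multiplicative.ofAdd (-(v i) + w i)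
    congr 1
    have h5 : (((c.val : ℕ) : ℤ) : ZMod P) = c := by
      push_cast
      exact ZMod.natCast_rightInverse c
    rw [zsmul_eq_mul, mul_one, h5, hc i]
    ring

lemma act_mk {P : ℕ} (σ : Equiv.Perm (Fin P)) (v : Fin P → ZMod P) :
    permHhom P σ ((ofv v : Kp P) : Hp P) = ((ofv (fun i => v (σ⁻¹ i)) : Kp P) : Hp P) := rfl

def eV {P : ℕ} (x : Fin P) : Fin P → ZMod P := fun i => if i = x then 1 else 0

def dV {P : ℕ} (x y : Fin P) : Fin P → ZMod P :=
  fun i => if i = x then 2 else if i = y then 1 else 0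

def ιv {P : ℕ} : Fin P → ZMod P := fun i => (i.val : ZMod P)

lemma eV_comp {P : ℕ} (σ : Equiv.Perm (Fin P)) (x : Fin P) :
    (fun i => eV x (σ⁻¹ i)) = eV (σ x) := by
  funext i
  simp only [eV, Equiv.Perm.inv_eq_iff_eq]

lemma dV_comp {P : ℕ} (σ : Equiv.Perm (Fin P)) (x y : Fin P) :
    (fun i => dV x y (σ⁻¹ i)) = dV (σ x) (σ y) := by
  funext i
  simp only [dV, Equiv.Perm.inv_eq_iff_eq]

lemma ex_notin {P : ℕ} (s : Finset (Fin P)) (h : s.card < P) : ∃ i, i ∉ s := by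
  by_contra h2
  push_neg at h2
  have he : s = Finset.univ := Finset.eq_univ_iff_forall.mpr h2
  rw [he, Finset.card_univ, Fintype.card_fin] at h
  omega

lemma ι_zero {P : ℕ} [NeZero P] : (ιv (0 : Fin P)) = 0 := by simp [ιv]

lemma ι_inj {P : ℕ} [NeZero P] : Function.Injective (ιv (P := P)) := by
  intro a b hab
  have hab' : ((a.val : ℕ) : ZMod P) = ((b.val : ℕ) : ZMod P) := hab
  have ha := ZMod.val_cast_of_lt a.isLt
  have hb := ZMod.val_cast_of_lt b.isLt
  have hv : a.val = b.val := by rw [← ha, ← hb, hab']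
  exact Fin.ext hv

lemma ι_rot {n : ℕ} (x : Fin (n+1)) : ιv (finRotate (n+1) x) = ιv x + 1 := by
  rw [finRotate_succ_apply]
  show (((x + 1 : Fin (n+1)).val : ℕ) : ZMod (n+1)) = ((x.val : ℕ) : ZMod (n+1)) + 1
  rw [Fin.val_add, ZMod.natCast_mod, Fin.val_one']
  push_cast
  rw [ZMod.natCast_mod]
  push_cast
  ring

lemma ι_rot_pow {n : ℕ} (j : ℕ) (x : Fin (n+1)) :
    ιv (((finRotate (n+1)) ^ j) x) = ιv x + j := by
  induction j generalizing x with
  | zero => simp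
  | succ k ih =>
      rw [pow_succ, Equiv.Perm.mul_apply, ih, ι_rot]
      push_cast
      ring

lemma ι_rot_pow_inv {n : ℕ} (j : ℕ) (x : Fin (n+1)) :
    ιv ((((finRotate (n+1)) ^ j)⁻¹) x) = ιv x - j := by
  have h := ι_rot_pow j ((((finRotate (n+1)) ^ j)⁻¹) x)
  rw [← Equiv.Perm.mul_apply, mul_inv_cancel, Equiv.Perm.one_apply] at h
  linear_combination -h

end Gen

/-- Bundled hypotheses of the main construction. -/
structure MS (q : ℕ) [NeZero q] (β : Equiv.Perm (Fin (2*q+1))) (m n : Fin q → Fin (2*q+1)) (r : ℕ) :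
    Prop where
  hq : q.Prime
  hp : (2*q+1).Prime
  hm : Function.Injective m
  hn : Function.Injective n
  hdisj : ∀ i j, m i ≠ n j
  hcover : ∀ x : Fin (2*q+1), x ≠ 0 → (∃ i, m i = x) ∨ (∃ i, n i = x)
  hβ0 : β 0 = 0
  hβm : ∀ i, β (m i) = m (i + 1)
  hβn : ∀ i, β (n i) = n (i + 1)
  hr1 : 1 < r
  hr2 : r < q
  hrq : r ^ q ≡ 1 [MOD 2*q+1]
  hβα : β⁻¹ * finRotate (2*q+1) * β = (finRotate (2*q+1)) ^ r

namespace MS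

variable {q : ℕ} [NeZero q] {β : Equiv.Perm (Fin (2*q+1))}
  {m n : Fin q → Fin (2*q+1)} {r : ℕ} (S : MS q β m n r)

include S

lemma hq3 : 3 ≤ q := by
  have h1 := S.hr1
  have h2 := S.hr2
  omega

lemma b0 (s : ℕ) : (β ^ s) 0 = 0 := by
  induction s with
  | zero => rfl
  | succ k ih => rw [pow_succ, Equiv.Perm.mul_apply, S.hβ0, ih]

lemma bm (s : ℕ) (i : Fin q) : (β ^ s) (m i) = m (i + (s : Fin q)) := by
  induction s generalizing i with
  | zero => simp
  | succ k ih =>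
      rw [pow_succ, Equiv.Perm.mul_apply, S.hβm, ih]
      congr 1
      push_cast
      ring

lemma bn (s : ℕ) (i : Fin q) : (β ^ s) (n i) = n (i + (s : Fin q)) := by
  induction s generalizing i with
  | zero => simp
  | succ k ih =>
      rw [pow_succ, Equiv.Perm.mul_apply, S.hβn, ih]
      congr 1
      push_cast
      ring

lemma bq : β ^ q = 1 := by
  ext x
  by_cases hx : x = 0
  · rw [hx, S.b0]
    rfl
  · rcases S.hcover x hx with ⟨i, rfl⟩ | ⟨i, rfl⟩
    · rw [S.bm, Fin.natCast_self, add_zero]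
      rfl
    · rw [S.bn, Fin.natCast_self, add_zero]
      rfl

lemma bne : β ≠ 1 := by
  intro h1
  have h := S.hβα
  rw [h1] at h
  simp only [inv_one, one_mul, mul_one] at h
  have h2 : (finRotate (2*q+1)) ^ 1 = (finRotate (2*q+1)) ^ r := by simpa using h
  rw [frp_pow_eq_iff] at h2
  have hq3 := S.hq3
  have hr1 := S.hr1
  have hr2 := S.hr2
  rw [Nat.mod_eq_of_lt (by omega), Nat.mod_eq_of_lt (by omega)] at h2
  omega

lemma ordβ : orderOf β = q := by
  haveI := Fact.mk S.hq
  exact orderOf_eq_prime S.bq S.bne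

lemma beta_pow_eq_iff (s t : ℕ) : β ^ s = β ^ t ↔ s % q = t % q := by
  rw [pow_eq_pow_iff_modEq, S.ordβ]
  rfl

lemma c1 (k : ℕ) :
    β⁻¹ * (finRotate (2*q+1)) ^ k * β = (finRotate (2*q+1)) ^ (k * r) := by
  have h := conj_pow_nat (finRotate (2*q+1)) β k
  rw [S.hβα, ← pow_mul] at h
  rw [← h]
  congr 1
  ring

lemma c1s (s j : ℕ) :
    (β ^ s)⁻¹ * (finRotate (2*q+1)) ^ j * β ^ s = (finRotate (2*q+1)) ^ (j * r ^ s) := by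
  induction s with
  | zero => simp
  | succ k ih =>
      rw [pow_succ, mul_inv_rev]
      have h1 : β⁻¹ * (β ^ k)⁻¹ * (finRotate (2*q+1)) ^ j * (β ^ k * β)
          = β⁻¹ * ((β ^ k)⁻¹ * (finRotate (2*q+1)) ^ j * β ^ k) * β := by group
      rw [h1, ih, S.c1]
      congr 1
      ring

lemma swap_ab (j s : ℕ) :
    (finRotate (2*q+1)) ^ j * β ^ s = β ^ s * (finRotate (2*q+1)) ^ (j * r ^ s) := by
  rw [← S.c1s s j]
  group

lemma c2 (k : ℕ) :
    β * (finRotate (2*q+1)) ^ k * β⁻¹ = (finRotate (2*q+1)) ^ (k * r ^ (q-1)) := by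
  have h3 : β⁻¹ * (finRotate (2*q+1)) ^ (k * r ^ (q-1)) * β = (finRotate (2*q+1)) ^ k := by
    rw [S.c1, frp_pow_eq_iff]
    have hmul : k * r ^ (q - 1) * r = k * r ^ q := by
      have hq1 : 1 ≤ q := S.hq.pos
      rw [mul_assoc, ← pow_succ]
      congr 2
      omega
    rw [hmul]
    have := Nat.ModEq.mul_left k S.hrq
    simpa [Nat.ModEq] using this
  rw [← h3]
  group

lemma c2' (k : ℕ) :
    β * (finRotate (2*q+1)) ^ k = (finRotate (2*q+1)) ^ (k * r ^ (q-1)) * β :=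
  mul_inv_eq_iff_eq_mul.mp (S.c2 k)

lemma c2s (s k : ℕ) :
    β ^ s * (finRotate (2*q+1)) ^ k
      = (finRotate (2*q+1)) ^ (k * (r ^ (q-1)) ^ s) * β ^ s := by
  induction s generalizing k with
  | zero => simp
  | succ u ih =>
      rw [pow_succ]
      calc β ^ u * β * (finRotate (2*q+1)) ^ k
          = β ^ u * (β * (finRotate (2*q+1)) ^ k) := by rw [mul_assoc]
        _ = β ^ u * ((finRotate (2*q+1)) ^ (k * r ^ (q-1)) * β) := by rw [S.c2']
        _ = (β ^ u * (finRotate (2*q+1)) ^ (k * r ^ (q-1))) * β := by rw [mul_assoc]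
        _ = ((finRotate (2*q+1)) ^ (k * r ^ (q-1) * (r ^ (q-1)) ^ u) * β ^ u) * β := by
              rw [ih]
        _ = (finRotate (2*q+1)) ^ (k * (r ^ (q-1)) ^ (u+1)) * (β ^ u * β) := by
              rw [mul_assoc]
              congr 2
              ring
        _ = _ := by rw [← pow_succ]

lemma nf {g : Equiv.Perm (Fin (2*q+1))} (hg : g ∈ Fsub (2*q+1) β) :
    ∃ j s : ℕ, g = (finRotate (2*q+1)) ^ j * β ^ s := by
  induction hg using Subgroup.closure_induction with
  | mem x hx =>
      simp only [Set.mem_insert_iff, Set.mem_singleton_iff] at hx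
      rcases hx with rfl | rfl
      · exact ⟨1, 0, by simp⟩
      · exact ⟨0, 1, by simp⟩
  | one => exact ⟨0, 0, by simp⟩
  | mul x y hx hy ihx ihy =>
      obtain ⟨j, s, rfl⟩ := ihx
      obtain ⟨k, t, rfl⟩ := ihy
      refine ⟨j + k * (r ^ (q-1)) ^ s, s + t, ?_⟩
      calc (finRotate (2*q+1)) ^ j * β ^ s * ((finRotate (2*q+1)) ^ k * β ^ t)
          = (finRotate (2*q+1)) ^ j * (β ^ s * (finRotate (2*q+1)) ^ k) * β ^ t := by
            group
        _ = (finRotate (2*q+1)) ^ j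
              * ((finRotate (2*q+1)) ^ (k * (r ^ (q-1)) ^ s) * β ^ s) * β ^ t := by
            rw [S.c2s]
        _ = _ := by rw [pow_add, pow_add]; group
  | inv x hx ihx =>
      obtain ⟨j, s, rfl⟩ := ihx
      have hbi : (β ^ s)⁻¹ = β ^ (s * (q-1)) := by
        apply inv_eq_of_mul_eq_one_right
        rw [← pow_add]
        have h1 : s + s * (q-1) = q * s := by
          obtain ⟨q', rfl⟩ : ∃ q', q = q' + 1 := ⟨q - 1, by have := S.hq.pos; omega⟩
          simp only [Nat.add_sub_cancel]
          ring
        rw [h1, pow_mul, S.bq, one_pow]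
      have hai : ((finRotate (2*q+1)) ^ j)⁻¹ = (finRotate (2*q+1)) ^ (j * (2*q)) := by
        apply inv_eq_of_mul_eq_one_right
        rw [← pow_add]
        have h1 : j + j * (2*q) = (2*q+1) * j := by ring
        rw [h1, pow_mul, frp_pow_self, one_pow]
      rw [mul_inv_rev, hbi, hai, S.c2s]
      exact ⟨_, _, rfl⟩

omit S in
lemma αmem : finRotate (2*q+1) ∈ Fsub (2*q+1) β :=
  Subgroup.subset_closure (Set.mem_insert _ _)

omit S in
lemma βmem : β ∈ Fsub (2*q+1) β :=
  Subgroup.subset_closure (Set.mem_insert_of_mem _ rfl)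

lemma apply_zero (j s : ℕ) :
    ((finRotate (2*q+1)) ^ j * β ^ s) 0 = ((j : Fin (2*q+1))) := by
  rw [Equiv.Perm.mul_apply, S.b0, frp_pow, zero_add]

lemma apply_m0 (j s : ℕ) :
    ((finRotate (2*q+1)) ^ j * β ^ s) (m 0) = m (s : Fin q) + (j : Fin (2*q+1)) := by
  rw [Equiv.Perm.mul_apply, S.bm, zero_add, frp_pow]

lemma cardF : Nat.card ↥(Fsub (2*q+1) β) = (2*q+1) * q := by
  have hbij : Function.Bijective (fun js : Fin (2*q+1) × Fin q =>
      (⟨(finRotate (2*q+1)) ^ (js.1 : ℕ) * β ^ (js.2 : ℕ),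
        mul_mem (pow_mem αmem _) (pow_mem βmem _)⟩ : ↥(Fsub (2*q+1) β))) := by
    constructor
    · rintro ⟨j, s⟩ ⟨j', s'⟩ h
      have h' : (finRotate (2*q+1)) ^ (j : ℕ) * β ^ (s : ℕ)
          = (finRotate (2*q+1)) ^ (j' : ℕ) * β ^ (s' : ℕ) := congrArg Subtype.val h
      have h0 := congrArg (fun σ : Equiv.Perm (Fin (2*q+1)) => σ 0) h'
      simp only [S.apply_zero] at h0
      rw [Fin.cast_val_eq_self, Fin.cast_val_eq_self] at h0
      subst h0
      have h2 : β ^ (s : ℕ) = β ^ (s' : ℕ) := mul_left_cancel h'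
      rw [S.beta_pow_eq_iff, Nat.mod_eq_of_lt s.isLt, Nat.mod_eq_of_lt s'.isLt] at h2
      simp [Prod.ext_iff, Fin.ext_iff, h2]
    · rintro ⟨g, hg⟩
      obtain ⟨j, s, rfl⟩ := S.nf hg
      refine ⟨(⟨j % (2*q+1), Nat.mod_lt _ (by omega)⟩, ⟨s % q, Nat.mod_lt _ S.hq.pos⟩), ?_⟩
      apply Subtype.ext
      show (finRotate (2*q+1)) ^ (j % (2*q+1)) * β ^ (s % q) = _
      rw [← frp_mod]
      congr 1
      exact (S.beta_pow_eq_iff _ _).mpr (Nat.mod_mod_of_dvd s dvd_rfl)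
  have hcc := Nat.card_congr (Equiv.ofBijective _ hbij)
  rw [← hcc]
  simp [Nat.card_eq_fintype_card]

lemma m_ne_zero (i : Fin q) : m i ≠ 0 := by
  intro h
  have h1 := S.hβm i
  rw [h, S.hβ0] at h1
  have h2 : m (i + 1) = m i := by rw [← h1, h]
  have h3 : i + 1 = i := S.hm h2
  have h4 : (1 : Fin q) = 0 := by
    calc (1 : Fin q) = (i + 1) - i := by ring
      _ = i - i := by rw [h3]
      _ = 0 := by ring
  rw [Fin.one_eq_zero_iff] at h4
  have := S.hq3
  omega

end MS



section Conj

open SemidirectProduct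

instance actF (P : ℕ) (β : Equiv.Perm (Fin P)) : MulAction ↥(Fsub P β) (Hp P) :=
  MulAction.compHom _ ((permHhom P).comp (Fsub P β).subtype)

lemma actF_smul {P : ℕ} {β : Equiv.Perm (Fin P)} (f : ↥(Fsub P β)) (h : Hp P) :
    f • h = permHhom P (f : Equiv.Perm (Fin P)) h := rfl

lemma conj_inl {P : ℕ} {β : Equiv.Perm (Fin P)} (g : Ggrp P β) (h : Hp P) :
    g * inl h * g⁻¹ = inl (permHhom P ((g.right : ↥(Fsub P β)) : Equiv.Perm (Fin P)) h) := by
  have hg : inl g.left * inr g.right = g := inl_left_mul_inr_right g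
  rw [← hg]
  have step1 : ((inl g.left : Ggrp P β) * inr g.right) * inl h
        * ((inl g.left : Ggrp P β) * inr g.right)⁻¹
      = (inl g.left : Ggrp P β) * (inr g.right * inl h * (inr g.right)⁻¹) * (inl g.left)⁻¹ := by
    group
  rw [step1, ← map_inv, ← inl_aut, ← map_inv, ← map_mul, ← map_mul]
  congr 1
  show g.left * (((permHhom P).comp (Fsub P β).subtype) g.right h) * g.left⁻¹ = _
  rw [mul_comm g.left, mul_assoc, mul_inv_cancel, mul_one]
  rfl

lemma class_eq {P : ℕ} {β : Equiv.Perm (Fin P)} (h : Hp P) :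
    {y : Ggrp P β | IsConj (inl h) y}
      = inl '' (MulAction.orbit ↥(Fsub P β) h) := by
  ext y
  simp only [Set.mem_setOf_eq, Set.mem_image]
  constructor
  · intro hy
    obtain ⟨g, hg⟩ := isConj_iff.mp hy
    refine ⟨permHhom P ((g.right : ↥(Fsub P β)) : Equiv.Perm (Fin P)) h, ?_, ?_⟩
    · exact MulAction.mem_orbit_iff.mpr ⟨g.right, rfl⟩
    · rw [← hg, conj_inl]
  · rintro ⟨x, hx, rfl⟩
    obtain ⟨f, rfl⟩ := MulAction.mem_orbit_iff.mp hx
    rw [isConj_iff]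
    refine ⟨inr f, ?_⟩
    rw [← map_inv, ← inl_aut]
    rfl

lemma convClassSize_inl {P : ℕ} {β : Equiv.Perm (Fin P)} (h : Hp P) :
    convClassSize (inl h : Ggrp P β) = Nat.card (MulAction.orbit ↥(Fsub P β) h) := by
  have e1 : {y : Ggrp P β // IsConj (inl h) y}
      ≃ ↥(inl '' (MulAction.orbit ↥(Fsub P β) h)) := Equiv.setCongr (class_eq h)
  have e2 := Equiv.Set.image _ (MulAction.orbit ↥(Fsub P β) h)
    (inl_injective (φ := (permHhom P).comp (Fsub P β).subtype))
  exact Nat.card_congr (e1.trans e2.symm)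

lemma card_orbit_dvd {P : ℕ} {β : Equiv.Perm (Fin P)} (h : Hp P) :
    Nat.card (MulAction.orbit ↥(Fsub P β) h) ∣ Nat.card ↥(Fsub P β) := by
  rw [Nat.card_congr (MulAction.orbitEquivQuotientStabilizer ↥(Fsub P β) h)]
  exact Subgroup.card_quotient_dvd_card _

lemma convClassSize_one {G : Type*} [Group G] : convClassSize (1 : G) = 1 := by
  have hset : {y : G | IsConj 1 y} = {1} := by
    ext y
    simp only [Set.mem_setOf_eq, Set.mem_singleton_iff]
    constructor
    · intro hy
      obtain ⟨g, hg⟩ := isConj_iff.mp hy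
      rw [mul_one, mul_inv_cancel] at hg
      exact hg.symm
    · rintro rfl
      exact IsConj.refl 1
  exact (Nat.card_congr (Equiv.setCongr hset)).trans Nat.card_unique

lemma dvd_cases {a b k : ℕ} (ha : a.Prime) (hb : b.Prime) (hk : k ∣ a * b) :
    k = 1 ∨ k = a ∨ k = b ∨ k = a * b := by
  by_cases hak : a ∣ k
  · obtain ⟨t, rfl⟩ := hak
    have ht : t ∣ b := (Nat.mul_dvd_mul_iff_left ha.pos).mp hk
    rcases (hb.eq_one_or_self_of_dvd t ht) with rfl | rfl
    · right; left; exact mul_one a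
    · right; right; right; rfl
  · have hco : Nat.Coprime k a := ((Nat.Prime.coprime_iff_not_dvd ha).mpr hak).symm
    have hkb : k ∣ b := hco.dvd_of_dvd_mul_left hk
    rcases (hb.eq_one_or_self_of_dvd k hkb) with rfl | rfl
    · left; rfl
    · right; right; left; rfl

end Conj


namespace MS

variable {q : ℕ} [NeZero q] {β : Equiv.Perm (Fin (2*q+1))}
  {m n : Fin q → Fin (2*q+1)} {r : ℕ} (S : MS q β m n r)

include S

lemma znat_inj {a b : ℕ} (ha : a < 2*q+1) (hb : b < 2*q+1)
    (h : (a : ZMod (2*q+1)) = b) : a = b := by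
  rw [← ZMod.val_cast_of_lt ha, ← ZMod.val_cast_of_lt hb, h]

lemma z10 : (1 : ZMod (2*q+1)) ≠ 0 := by
  intro h
  have h3 := S.hq3
  have := S.znat_inj (a := 1) (b := 0) (by omega) (by omega) (by exact_mod_cast h)
  omega

lemma z20 : (2 : ZMod (2*q+1)) ≠ 0 := by
  intro h
  have h3 := S.hq3
  have := S.znat_inj (a := 2) (b := 0) (by omega) (by omega) (by exact_mod_cast h)
  omega

lemma z21 : (2 : ZMod (2*q+1)) ≠ 1 := by
  intro h
  have h3 := S.hq3
  have := S.znat_inj (a := 2) (b := 1) (by omega) (by omega) (by exact_mod_cast h)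
  omega

lemma e_inj {x y : Fin (2*q+1)}
    (h : ((ofv (eV x) : Kp (2*q+1)) : Hp (2*q+1)) = ((ofv (eV y) : Kp (2*q+1)) : Hp (2*q+1))) :
    x = y := by
  rw [mk_eq] at h
  obtain ⟨c, hc⟩ := h
  have hcard : ({x, y} : Finset (Fin (2*q+1))).card < 2*q+1 := by
    have h1 : ({x, y} : Finset (Fin (2*q+1))).card ≤ 2 :=
      le_trans (Finset.card_insert_le _ _) (by simp)
    have h3 := S.hq3
    omega
  obtain ⟨i0, hi0⟩ := ex_notin _ hcard
  simp only [Finset.mem_insert, Finset.mem_singleton, not_or] at hi0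
  have hc0 : c = 0 := by
    have hcc := hc i0
    simp only [eV, if_neg hi0.1, if_neg hi0.2, zero_add] at hcc
    exact hcc.symm
  have hx := hc x
  rw [hc0, add_zero] at hx
  simp only [eV, if_pos rfl] at hx
  by_cases hxy : x = y
  · exact hxy
  · rw [if_neg hxy] at hx
    exact absurd hx.symm S.z10

lemma d_inj {x y x' y' : Fin (2*q+1)} (hxy : x ≠ y)
    (h : ((ofv (dV x y) : Kp (2*q+1)) : Hp (2*q+1))
        = ((ofv (dV x' y') : Kp (2*q+1)) : Hp (2*q+1))) :
    x = x' ∧ y = y' := by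
  rw [mk_eq] at h
  obtain ⟨c, hc⟩ := h
  have hcard : ({x, y, x', y'} : Finset (Fin (2*q+1))).card < 2*q+1 := by
    have h1 : ({x, y, x', y'} : Finset (Fin (2*q+1))).card ≤ 4 := by
      refine le_trans (Finset.card_insert_le _ _) ?_
      have h2 : ({y, x', y'} : Finset (Fin (2*q+1))).card ≤ 3 := by
        refine le_trans (Finset.card_insert_le _ _) ?_
        have h3 : ({x', y'} : Finset (Fin (2*q+1))).card ≤ 2 :=
          le_trans (Finset.card_insert_le _ _) (by simp)
        omega
      omega
    have h3 := S.hq3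
    omega
  obtain ⟨i0, hi0⟩ := ex_notin _ hcard
  simp only [Finset.mem_insert, Finset.mem_singleton, not_or] at hi0
  obtain ⟨hi1, hi2, hi3, hi4⟩ := hi0
  have hc0 : c = 0 := by
    have hcc := hc i0
    simp only [dV, if_neg hi1, if_neg hi2, if_neg hi3, if_neg hi4, zero_add] at hcc
    exact hcc.symm
  have hpt : ∀ i, dV x' y' i = dV x y i := by
    intro i
    rw [hc i, hc0, add_zero]
  have hxx : x = x' := by
    have h1 := hpt x
    simp only [dV, eq_self_iff_true, if_true] at h1
    by_cases he : x = x'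
    · exact he
    · rw [if_neg he] at h1
      by_cases he2 : x = y'
      · rw [if_pos he2] at h1
        exact absurd h1 (Ne.symm S.z21)
      · rw [if_neg he2] at h1
        exact absurd h1 (Ne.symm S.z20)
  have hyy : y = y' := by
    have h1 := hpt y
    simp only [dV, if_neg (Ne.symm hxy), eq_self_iff_true, if_true] at h1
    by_cases he : y = x'
    · rw [if_pos he] at h1
      exact absurd h1 S.z21
    · rw [if_neg he] at h1
      by_cases he2 : y = y'
      · exact he2
      · rw [if_neg he2] at h1
        exact absurd h1.symm S.z10
  exact ⟨hxx, hyy⟩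

end MS


namespace MS

variable {q : ℕ} [NeZero q] {β : Equiv.Perm (Fin (2*q+1))}
  {m n : Fin q → Fin (2*q+1)} {r : ℕ} (S : MS q β m n r)

include S

lemma card_orbit_e :
    Nat.card ↥(MulAction.orbit ↥(Fsub (2*q+1) β)
      ((ofv (eV (0 : Fin (2*q+1))) : Kp (2*q+1)) : Hp (2*q+1))) = 2*q+1 := by
  have key : ∀ σ : Equiv.Perm (Fin (2*q+1)),
      permHhom (2*q+1) σ ((ofv (eV (0 : Fin (2*q+1))) : Kp (2*q+1)) : Hp (2*q+1))
        = ((ofv (eV (σ 0)) : Kp (2*q+1)) : Hp (2*q+1)) := by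
    intro σ
    rw [act_mk, eV_comp]
  have hrange : MulAction.orbit ↥(Fsub (2*q+1) β)
        ((ofv (eV (0 : Fin (2*q+1))) : Kp (2*q+1)) : Hp (2*q+1))
      = Set.range (fun x : Fin (2*q+1) => ((ofv (eV x) : Kp (2*q+1)) : Hp (2*q+1))) := by
    ext z
    constructor
    · rintro ⟨f, rfl⟩
      exact ⟨(f : Equiv.Perm (Fin (2*q+1))) 0, (key _).symm⟩
    · rintro ⟨x, rfl⟩
      refine ⟨⟨(finRotate (2*q+1)) ^ (x : ℕ), pow_mem αmem _⟩, ?_⟩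
      have hx0 : ((finRotate (2*q+1)) ^ (x : ℕ)) 0 = x := by
        rw [frp_pow, zero_add, Fin.cast_val_eq_self]
      show permHhom (2*q+1) ((finRotate (2*q+1)) ^ (x : ℕ)) _ = _
      rw [key, hx0]
  rw [hrange, ← Nat.card_congr (Equiv.ofInjective _ (fun a b hab => S.e_inj hab))]
  simp

lemma card_orbit_i :
    Nat.card ↥(MulAction.orbit ↥(Fsub (2*q+1) β)
      ((ofv ιv : Kp (2*q+1)) : Hp (2*q+1))) = q := by
  have keyA : ∀ j : ℕ, permHhom (2*q+1) ((finRotate (2*q+1)) ^ j)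
      ((ofv ιv : Kp (2*q+1)) : Hp (2*q+1)) = ((ofv ιv : Kp (2*q+1)) : Hp (2*q+1)) := by
    intro j
    rw [act_mk, mk_eq]
    exact ⟨(j : ZMod (2*q+1)), fun i => by rw [ι_rot_pow_inv]; ring⟩
  have keyB : ∀ s : ℕ, permHhom (2*q+1) (β ^ s) ((ofv ιv : Kp (2*q+1)) : Hp (2*q+1))
      = ((ofv (fun i => ιv ((β ^ s)⁻¹ i)) : Kp (2*q+1)) : Hp (2*q+1)) :=
    fun s => act_mk _ _
  have hrange : MulAction.orbit ↥(Fsub (2*q+1) β) ((ofv ιv : Kp (2*q+1)) : Hp (2*q+1))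
      = Set.range (fun s : Fin q =>
          ((ofv (fun i => ιv ((β ^ (s : ℕ))⁻¹ i)) : Kp (2*q+1)) : Hp (2*q+1))) := by
    ext z
    constructor
    · rintro ⟨f, rfl⟩
      obtain ⟨j, s, hf⟩ := S.nf f.2
      refine ⟨⟨s % q, Nat.mod_lt _ S.hq.pos⟩, ?_⟩
      have hβs : β ^ (s % q) = β ^ s := (S.beta_pow_eq_iff _ _).mpr (Nat.mod_mod_of_dvd s dvd_rfl)
      show ((ofv (fun i => ιv ((β ^ (s % q))⁻¹ i)) : Kp (2*q+1)) : Hp (2*q+1)) = _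
      rw [hβs]
      show _ = permHhom (2*q+1) (f : Equiv.Perm (Fin (2*q+1)))
        ((ofv ιv : Kp (2*q+1)) : Hp (2*q+1))
      rw [hf, S.swap_ab, map_mul, MulAut.mul_apply, keyA, keyB]
    · rintro ⟨s, rfl⟩
      exact ⟨⟨β ^ (s : ℕ), pow_mem βmem _⟩, keyB (s : ℕ)⟩
  have hinj : Function.Injective (fun s : Fin q =>
      ((ofv (fun i => ιv ((β ^ (s : ℕ))⁻¹ i)) : Kp (2*q+1)) : Hp (2*q+1))) := by
    intro s t hst
    simp only at hst
    rw [mk_eq] at hst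
    obtain ⟨c, hc⟩ := hst
    have hzs : (β ^ (s : ℕ))⁻¹ 0 = 0 := Equiv.Perm.inv_eq_iff_eq.mpr (S.b0 _).symm
    have hzt : (β ^ (t : ℕ))⁻¹ 0 = 0 := Equiv.Perm.inv_eq_iff_eq.mpr (S.b0 _).symm
    have hcz : c = 0 := by
      have hc0 := hc 0
      rw [hzs, hzt, ι_zero, zero_add] at hc0
      exact hc0.symm
    have hfun : ∀ i, (β ^ (t : ℕ))⁻¹ i = (β ^ (s : ℕ))⁻¹ i := by
      intro i
      apply ι_inj
      rw [hc i, hcz, add_zero]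
    have hperm : β ^ (s : ℕ) = β ^ (t : ℕ) := by
      have hinveq : (β ^ (t : ℕ))⁻¹ = (β ^ (s : ℕ))⁻¹ := Equiv.ext hfun
      exact (inv_inj.mp hinveq).symm
    rw [S.beta_pow_eq_iff, Nat.mod_eq_of_lt s.isLt, Nat.mod_eq_of_lt t.isLt] at hperm
    exact Fin.ext hperm
  rw [hrange, ← Nat.card_congr (Equiv.ofInjective _ hinj)]
  simp

lemma card_orbit_d :
    Nat.card ↥(MulAction.orbit ↥(Fsub (2*q+1) β)
      ((ofv (dV (0 : Fin (2*q+1)) (m 0)) : Kp (2*q+1)) : Hp (2*q+1))) = (2*q+1) * q := by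
  have keyD : ∀ σ : Equiv.Perm (Fin (2*q+1)),
      permHhom (2*q+1) σ ((ofv (dV (0 : Fin (2*q+1)) (m 0)) : Kp (2*q+1)) : Hp (2*q+1))
        = ((ofv (dV (σ 0) (σ (m 0))) : Kp (2*q+1)) : Hp (2*q+1)) := by
    intro σ
    rw [act_mk, dV_comp]
  have hrange : MulAction.orbit ↥(Fsub (2*q+1) β)
        ((ofv (dV (0 : Fin (2*q+1)) (m 0)) : Kp (2*q+1)) : Hp (2*q+1))
      = Set.range (fun js : Fin (2*q+1) × Fin q =>
          ((ofv (dV js.1 (m js.2 + js.1)) : Kp (2*q+1)) : Hp (2*q+1))) := by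
    ext z
    constructor
    · rintro ⟨f, rfl⟩
      obtain ⟨j, s, hf⟩ := S.nf f.2
      refine ⟨((j : Fin (2*q+1)), (s : Fin q)), ?_⟩
      show ((ofv (dV (j : Fin (2*q+1)) (m (s : Fin q) + (j : Fin (2*q+1)))) :
          Kp (2*q+1)) : Hp (2*q+1))
        = permHhom (2*q+1) (f : Equiv.Perm (Fin (2*q+1)))
            ((ofv (dV (0 : Fin (2*q+1)) (m 0)) : Kp (2*q+1)) : Hp (2*q+1))
      rw [hf, keyD, S.apply_zero, S.apply_m0]
    · rintro ⟨⟨j, s⟩, rfl⟩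
      refine ⟨⟨(finRotate (2*q+1)) ^ (j : ℕ) * β ^ (s : ℕ),
        mul_mem (pow_mem αmem _) (pow_mem βmem _)⟩, ?_⟩
      show permHhom (2*q+1) ((finRotate (2*q+1)) ^ (j : ℕ) * β ^ (s : ℕ)) _ = _
      rw [keyD, S.apply_zero, S.apply_m0, Fin.cast_val_eq_self, Fin.cast_val_eq_self]
  have hinj : Function.Injective (fun js : Fin (2*q+1) × Fin q =>
      ((ofv (dV js.1 (m js.2 + js.1)) : Kp (2*q+1)) : Hp (2*q+1))) := by
    rintro ⟨j, s⟩ ⟨j', s'⟩ hst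
    simp only at hst
    have hne : (j : Fin (2*q+1)) ≠ m s + j := by
      intro he
      apply S.m_ne_zero s
      apply add_right_cancel (b := j)
      rw [zero_add]
      exact he.symm
    obtain ⟨h1, h2⟩ := S.d_inj hne hst
    subst h1
    have h3 : m s = m s' := by
      apply add_right_cancel (b := j)
      exact h2
    have h4 : s = s' := S.hm h3
    simp [h4]
  rw [hrange, ← Nat.card_congr (Equiv.ofInjective _ hinj)]
  simp [Nat.card_eq_fintype_card]

end MS

theorem stmt_19 (p q : ℕ) [Fact p.Prime] [Fact q.Prime] (hpq : p = 2 * q + 1)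
    (β : Equiv.Perm (Fin p)) (m n : Fin q → Fin p)
    (hm : Function.Injective m) (hn : Function.Injective n)
    (hdisj : ∀ i j, m i ≠ n j)
    (hcover : ∀ x : Fin p, x ≠ 0 → (∃ i, m i = x) ∨ (∃ i, n i = x))
    (hβ0 : β 0 = 0)
    (hβm : ∀ i, β (m i) = m (i + 1)) (hβn : ∀ i, β (n i) = n (i + 1))
    (r : ℕ) (hr1 : 1 < r) (hr2 : r < q) (hrq : r ^ q ≡ 1 [MOD p])
    (hβα : β⁻¹ * finRotate p * β = (finRotate p) ^ r)
    :
    {n : ℕ | ∃ h : Hp p, n = convClassSize (SemidirectProduct.inl h : Ggrp p β)}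
      = {1, p, q, p * q} := by
  subst hpq
  haveI : NeZero q := ⟨(Fact.out (p := q.Prime)).pos.ne'⟩
  have S : MS q β m n r :=
    ⟨Fact.out, Fact.out, hm, hn, hdisj, hcover, hβ0, hβm, hβn, hr1, hr2, hrq, hβα⟩
  ext k
  simp only [Set.mem_setOf_eq, Set.mem_insert_iff, Set.mem_singleton_iff]
  constructor
  · rintro ⟨h, rfl⟩
    rw [convClassSize_inl h]
    have hd : Nat.card ↥(MulAction.orbit ↥(Fsub (2*q+1) β) h) ∣ (2*q+1) * q := by
      have h1 := card_orbit_dvd (β := β) h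
      rwa [S.cardF] at h1
    exact dvd_cases S.hp S.hq hd
  · rintro (hk | hk | hk | hk)
    · refine ⟨1, ?_⟩
      rw [hk, map_one, convClassSize_one]
    · refine ⟨((ofv (eV (0 : Fin (2*q+1))) : Kp (2*q+1)) : Hp (2*q+1)), ?_⟩
      rw [hk, convClassSize_inl, S.card_orbit_e]
    · refine ⟨((ofv ιv : Kp (2*q+1)) : Hp (2*q+1)), ?_⟩
      rw [hk, convClassSize_inl, S.card_orbit_i]
    · refine ⟨((ofv (dV (0 : Fin (2*q+1)) (m 0)) : Kp (2*q+1)) : Hp (2*q+1)), ?_⟩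
      rw [hk, convClassSize_inl, S.card_orbit_d]
end
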